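/- Let T be a finite tree (a finite connected acyclic simple graph with at least one vertex) and let D ≥ 1. Then the graph on the vertex set of T in which two distinct vertices are adjacent if and only if their graph distance in T is at most D is dismantlable. -/

import Mathlib

open SimpleGraph

variable {V : Type*}

/-- The closed neighbourhood of a vertex: the vertex together with all its neighbours. -/
def closedNbhd (G : SimpleGraph V) (ρ : V) : Set V := insert ρ {w | G.Adj ρ w}

/-- `ρ` is dominated by `π` within the subgraph of `G` induced on `S`:
`π ∈ S`, `π ≠ ρ`, and `N(ρ) ∩ S ⊆ N(π)`. -/
def DominatedIn (G : SimpleGraph V) (S : Set V) (ρ π : V) : Prop :=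
  π ∈ S ∧ π ≠ ρ ∧ ∀ w ∈ S, w ∈ closedNbhd G ρ → w ∈ closedNbhd G π

/-- The subgraph of `G` induced on `S` is dismantlable: the vertices of `S` can be
arranged in a (finite) list such that each vertex except the last is dominated in the
subgraph induced on it and the later vertices. -/
def DismantlableOn (G : SimpleGraph V) (S : Set V) : Prop :=
  ∃ l : List V, l.Nodup ∧ (∀ v, v ∈ l ↔ v ∈ S) ∧
    ∀ (i : ℕ) (h : i < l.length), i < l.length - 1 →
      ∃ π, DominatedIn G {w | w ∈ l.drop i} (l[i]'h) π

/-- A graph is dismantlable if the subgraph induced on all of its vertices is. -/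
def Dismantlable (G : SimpleGraph V) : Prop := DismantlableOn G Set.univ

/-- The set `Π*(ρ)` of all vertices appearing in pairs of `Π ρ`. -/
def PiStar (Pr : V → Finset (Sym2 V)) (ρ : V) : Set V := {v | ∃ p ∈ Pr ρ, v ∈ p}

/-- `Pr` is a `σ`-projection: it assigns to each vertex `ρ ≠ σ` a nonempty finite set of
unordered pairs of vertices such that (i) every finite set `R` containing a vertex other
than `σ` has an exposed vertex, and (ii) there is no cycle `ρ₀, …, ρ_{m-1}` with
`ρ_{i+1} ∈ Π*(ρ_i)` (indices mod `m`). -/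
structure IsSigmaProjection (G : SimpleGraph V) (σ : V) (Pr : V → Finset (Sym2 V)) : Prop where
  nonempty : ∀ ρ, ρ ≠ σ → (Pr ρ).Nonempty
  exposed : ∀ R : Finset V, (∃ ρ ∈ R, ρ ≠ σ) →
    ∃ ρ ∈ R, ρ ≠ σ ∧ ∃ p ∈ Pr ρ, ∀ π ∈ p,
      ∀ w ∈ R, w ∈ closedNbhd G ρ → w ∈ closedNbhd G π
  acyclic : ¬ ∃ m : ℕ, 0 < m ∧ ∃ f : ZMod m → V,
    ∀ i, f i ≠ σ ∧ f (i + 1) ∈ PiStar Pr (f i)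

/-- `R` is `Π`-convex: for every `ρ ∈ R` other than `σ`, each pair in `Π ρ` meets `R`. -/
def PiConvex (σ : V) (Pr : V → Finset (Sym2 V)) (R : Set V) : Prop :=
  ∀ ρ ∈ R, ρ ≠ σ → ∀ p ∈ Pr ρ, ∃ v ∈ p, v ∈ R

/-- The orbit `HR` of a set `R` under a group action. -/
def orbitSet (H : Type*) [Group H] [MulAction H V] (R : Set V) : Set V :=
  {x | ∃ h : H, ∃ ρ ∈ R, x = h • ρ}

/-- The geometric realization of the flag complex of `G` inside `ℝ^V`: the union over
all (nonempty) cliques of the convex hulls of the corresponding standard basis vectors. -/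
def flagRealization [DecidableEq V] (G : SimpleGraph V) : Set (V → ℝ) :=
  ⋃ (Δ : Set V) (_ : Δ.Nonempty) (_ : G.IsClique Δ),
    convexHull ℝ ((fun v => (Pi.single v 1 : V → ℝ)) '' Δ)

/-- A walk is a geodesic if its length equals the distance between its endpoints. -/
def IsGeodesic (G : SimpleGraph V) {u v : V} (p : G.Walk u v) : Prop :=
  p.length = G.dist u v

/-- `G` is `δ`-hyperbolic: for any geodesic triangle, each vertex on one side is within
distance `δ` of some vertex on the union of the other two sides. -/
def Hyperbolic (G : SimpleGraph V) (δ : ℕ) : Prop :=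
  ∀ (u v w : V) (p : G.Walk u v) (q : G.Walk v w) (r : G.Walk w u),
    IsGeodesic G p → IsGeodesic G q → IsGeodesic G r →
    ∀ t ∈ p.support, ∃ s, (s ∈ q.support ∨ s ∈ r.support) ∧ G.dist t s ≤ δ

/-- The Rips graph `Γ_D`: same vertices, two distinct vertices adjacent iff their
graph distance in `G` is at most `D`. -/
def ripsGraph (G : SimpleGraph V) (D : ℕ) : SimpleGraph V where
  Adj u v := u ≠ v ∧ G.dist u v ≤ D
  symm := by
    constructor
    intro u v h
    exact ⟨h.1.symm, by rw [SimpleGraph.dist_comm]; exact h.2⟩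
  loopless := by
    constructor
    intro v h
    exact h.1 rfl

/-- The ball of radius `r` around a set `C` of vertices. -/
def ballSet (G : SimpleGraph V) (C : Set V) (r : ℕ) : Set V :=
  {v | ∃ c ∈ C, G.dist v c ≤ r}

/-!
Root the tree at a vertex `σ`. A deepest vertex `ρ` is dominated in the Rips graph by its
parent `π`: every other remaining vertex `w` is no deeper than `ρ`, so the tree path from `ρ`
to `w` runs through `π` and `π` is strictly closer to `w` than `ρ` is. Deleting deepest
vertices one at a time keeps the vertex set closed under passing to shallower vertices, and
ends at `σ`.
-/

theorem dismantlableOn_singleton (G : SimpleGraph V) (v : V) : DismantlableOn G {v} :=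
  ⟨[v], List.nodup_singleton v, by simp, by simp⟩

theorem DismantlableOn.insert {G : SimpleGraph V} {S : Set V} {ρ π : V}
    (hS : DismantlableOn G S) (hρ : ρ ∉ S) (hdom : DominatedIn G (insert ρ S) ρ π) :
    DismantlableOn G (insert ρ S) := by
  obtain ⟨l, hnd, hmem, hdis⟩ := hS
  refine ⟨ρ :: l, List.nodup_cons.mpr ⟨fun h => hρ ((hmem ρ).mp h), hnd⟩,
    by simp [hmem], fun i hi hi' => ?_⟩
  cases i with
  | zero =>
    refine ⟨π, ?_⟩
    show DominatedIn G {w | w ∈ ρ :: l} ρ π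
    convert hdom using 2
    ext w
    simp [hmem]
  | succ i => exact hdis i _ (by simp at hi'; omega)

namespace SimpleGraph

variable {G : SimpleGraph V}

theorem Connected.exists_adj_dist_add_one (hG : G.Connected) {σ ρ : V} (hρ : ρ ≠ σ) :
    ∃ π, G.Adj ρ π ∧ G.dist σ π + 1 = G.dist σ ρ := by
  obtain ⟨p, hp⟩ := hG.exists_walk_length_eq_dist ρ σ
  cases p with
  | nil => exact absurd rfl hρ
  | @cons _ π _ hπ q =>
    refine ⟨π, hπ, ?_⟩
    have hq : G.dist π σ ≤ q.length := dist_le q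
    have hρπ : G.dist ρ σ ≤ G.dist ρ π + G.dist π σ := hG.dist_triangle
    rw [dist_eq_one_iff_adj.mpr hπ] at hρπ
    rw [Walk.length_cons] at hp
    rw [dist_comm (u := σ), dist_comm (u := σ)]
    omega

theorem IsTree.eq_of_adj_of_dist_add_one (hG : G.IsTree) {σ ρ π π' : V}
    (hπ : G.Adj π ρ) (hπ' : G.Adj π' ρ)
    (hdπ : G.dist σ π + 1 = G.dist σ ρ) (hdπ' : G.dist σ π' + 1 = G.dist σ ρ) : π = π' := by
  obtain ⟨p, hp⟩ := hG.connected.exists_walk_length_eq_dist σ π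
  obtain ⟨p', hp'⟩ := hG.connected.exists_walk_length_eq_dist σ π'
  have hpath : (p.concat hπ).IsPath :=
    (p.concat hπ).isPath_of_length_eq_dist (by rw [Walk.length_concat, hp, hdπ])
  have hpath' : (p'.concat hπ').IsPath :=
    (p'.concat hπ').isPath_of_length_eq_dist (by rw [Walk.length_concat, hp', hdπ'])
  have := (hG.isAcyclic.subsingleton_path σ ρ).elim ⟨_, hpath⟩ ⟨_, hpath'⟩
  exact (Walk.concat_inj (Subtype.ext_iff.mp this)).1

/-- A geodesic from `ρ` to `w` cannot start at a child `x` of `ρ`: the same statement for `x`,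
whose parent is `ρ`, would make `dist x w` exceed `dist ρ w`. So it starts at the parent `π`. -/
theorem IsTree.dist_lt_dist_of_parent (hG : G.IsTree) {σ ρ π w : V} (hπ : G.Adj ρ π)
    (hdπ : G.dist σ π + 1 = G.dist σ ρ) (hw : G.dist σ w ≤ G.dist σ ρ) (hwρ : w ≠ ρ) :
    G.dist π w < G.dist ρ w := by
  induction h : G.dist ρ w using Nat.strong_induction_on generalizing ρ π with
  | _ n ih =>
    obtain ⟨p, hp⟩ := hG.connected.exists_walk_length_eq_dist ρ w
    cases p with
    | nil => exact absurd rfl hwρ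
    | @cons _ x _ hx q =>
      have hxw : G.dist x w ≤ q.length := dist_le q
      rw [Walk.length_cons, h] at hp
      rcases hG.dist_eq_dist_add_one_of_adj σ hx with hρx | hxρ
      · obtain rfl := hG.eq_of_adj_of_dist_add_one hx.symm hπ.symm hρx.symm hdπ
        omega
      · have := ih _ (by omega) hx.symm hxρ.symm (by omega) (by rintro rfl; omega) rfl
        omega

theorem IsTree.dominatedIn_ripsGraph_of_parent (hG : G.IsTree) {D : ℕ} (hD : 1 ≤ D)
    {S : Set V} {σ ρ π : V} (hπ : G.Adj ρ π) (hdπ : G.dist σ π + 1 = G.dist σ ρ) (hπS : π ∈ S)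
    (hS : ∀ w ∈ S, G.dist σ w ≤ G.dist σ ρ) : DominatedIn (ripsGraph G D) S ρ π := by
  refine ⟨hπS, hπ.ne', fun w hwS hwρ => ?_⟩
  simp only [closedNbhd, Set.mem_insert_iff, Set.mem_ofPred_eq] at hwρ ⊢
  rcases hwρ with rfl | ⟨hρw, hdw⟩
  · exact Or.inr ⟨hπ.ne', by rw [dist_comm, dist_eq_one_iff_adj.mpr hπ]; exact hD⟩
  · by_cases hwπ : w = π
    · exact Or.inl hwπ
    · exact Or.inr ⟨Ne.symm hwπ,
        ((hG.dist_lt_dist_of_parent hπ hdπ (hS w hwS) hρw.symm).trans_le hdw).le⟩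

theorem IsTree.dismantlableOn_ripsGraph {T : SimpleGraph V}
    (hT : T.IsTree) {D : ℕ} (hD : 1 ≤ D) (σ : V) (S : Finset V) (hσ : σ ∈ S)
    (hS : ∀ u ∈ S, ∀ v, T.dist σ v < T.dist σ u → v ∈ S) :
    DismantlableOn (ripsGraph T D) S := by
  classical
  induction S using Finset.strongInduction with
  | _ S ih =>
    obtain ⟨ρ, hρS, hρmax⟩ := S.exists_max_image (T.dist σ) ⟨σ, hσ⟩
    by_cases hρσ : ρ = σ
    · have hS_eq : (S : Set V) = {σ} := by
        ext u
        refine ⟨fun hu => ?_, by rintro rfl; exact hσ⟩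
        have := hρmax u hu
        rw [hρσ, dist_self, Nat.le_zero, hT.connected.dist_eq_zero_iff] at this
        exact this.symm
      rw [hS_eq]
      exact dismantlableOn_singleton _ σ
    obtain ⟨π, hπ, hdπ⟩ := hT.connected.exists_adj_dist_add_one hρσ
    have hS_eq : (S : Set V) = insert ρ ↑(S.erase ρ) := by simp [hρS]
    rw [hS_eq]
    refine DismantlableOn.insert (π := π) (ih _ (S.erase_ssubset hρS) ?_ ?_) (by simp) ?_
    · exact Finset.mem_erase.mpr ⟨Ne.symm hρσ, hσ⟩
    · intro u hu v hv
      rw [Finset.mem_erase] at hu ⊢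
      exact ⟨by rintro rfl; exact absurd (hρmax u hu.2) (by omega), hS u hu.2 v hv⟩
    · rw [← hS_eq]
      exact hT.dominatedIn_ripsGraph_of_parent hD hπ hdπ (hS ρ hρS π (by omega)) hρmax

end SimpleGraph

theorem rips_of_tree_dismantlable {V : Type*} [Fintype V] [Nonempty V]
    (T : SimpleGraph V) (hT : T.IsTree) (D : ℕ) (hD : 1 ≤ D) :
    Dismantlable (ripsGraph T D) := by
  obtain ⟨σ⟩ := ‹Nonempty V›
  have := hT.dismantlableOn_ripsGraph hD σ Finset.univ (Finset.mem_univ σ)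
    (fun _ _ v _ => Finset.mem_univ v)
  rwa [Finset.coe_univ] at this
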